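/- arXiv:2306.14533 — 2 statements merged into one kernel-verified Lean document; each statement's English description precedes it below -/
import Mathlib

section
/- Let M be a compact metric space, λ a finite Borel measure on M, and p ∈ (1, ∞). Let f₀, f₁ : M → (0, ∞) be continuous. Call a path admissible if it is a continuous map f : [0,1] × M → (0, ∞) with continuous partial derivative ∂_t f and f(0,·) = f₀, f(1,·) = f₁, and define its length L(f) = ∫_0^1 F_p(f(t,·), ∂_t f(t,·)) dt, where F_p(f, a) := (∫_M |a(x)/f(x)|^p f(x) dλ(x))^{1/p}. Then the infimum of L over all admissible paths equals p·‖f₁^{1/p} − f₀^{1/p}‖_{L^p(λ)}, and it is attained by the path f(t, x) = ((1−t)·f₀(x)^{1/p} + t·f₁(x)^{1/p})^p, which moreover has constant speed: F_p(f(t,·), ∂_t f(t,·)) = p·‖f₁^{1/p} − f₀^{1/p}‖_{L^p(λ)} for every t ∈ [0,1]. -/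
/-!
Writing a density as `f = u ^ p`, the Fisher–Rao speed becomes `F_p(f, ∂ₜf) = p ‖∂ₜu‖_{L^p}`,
so the length of a path is `p` times the `L^p` length of its `p`-th root `u = f ^ (1/p)`.
By Minkowski's integral inequality, `‖u₁ - u₀‖_p = ‖∫₀¹ ∂ₜu dt‖_p ≤ ∫₀¹ ‖∂ₜu‖_p dt`, with
equality along the straight line `u = (1 - t) u₀ + t u₁`, whose `L^p` speed is constantly
`‖u₁ - u₀‖_p`.
-/

open MeasureTheory

/-- The `L^p`-Fisher–Rao metric `F_p(f, a) = (∫ |a/f|^p f dλ)^{1/p}`. -/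
noncomputable def Fp {M : Type*} [MeasurableSpace M] (lam : Measure M) (p : ℝ)
    (f a : M → ℝ) : ℝ :=
  (∫ x, |a x / f x| ^ p * f x ∂lam) ^ (1 / p)

/-- An admissible path of positive densities from `f₀` to `f₁`: a continuous map
`f : [0,1] × M → (0,∞)` with continuous time derivative `f'` and the given endpoints. -/
def Admissible {M : Type*} [TopologicalSpace M]
    (f f' : ℝ → M → ℝ) (f₀ f₁ : M → ℝ) : Prop :=
  ContinuousOn (fun q : ℝ × M => f q.1 q.2) (Set.Icc 0 1 ×ˢ Set.univ) ∧
  (∀ t ∈ Set.Icc (0 : ℝ) 1, ∀ x, 0 < f t x) ∧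
  ContinuousOn (fun q : ℝ × M => f' q.1 q.2) (Set.Icc 0 1 ×ˢ Set.univ) ∧
  (∀ x, ∀ t ∈ Set.Icc (0 : ℝ) 1,
    HasDerivWithinAt (fun s => f s x) (f' t x) (Set.Icc 0 1) t) ∧
  f 0 = f₀ ∧ f 1 = f₁

open Set

lemma abs_div_rpow_mul_eq {p : ℝ} (hp : 0 < p) {f : ℝ} (hf : 0 < f) (a : ℝ) :
    |a / f| ^ p * f = p ^ p * |1 / p * f ^ (1 / p - 1) * a| ^ p := by
  have h_abs : |1 / p * f ^ (1 / p - 1) * a| = 1 / p * f ^ (1 / p - 1) * |a| := by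
    rw [abs_mul, abs_mul, abs_of_pos (by positivity : (0 : ℝ) < 1 / p),
      abs_of_pos (Real.rpow_pos_of_pos hf _)]
  have h_exp : (1 / p - 1) * p = 1 - p := by field_simp
  rw [h_abs, Real.mul_rpow (by positivity) (abs_nonneg a),
    Real.mul_rpow (by positivity) (Real.rpow_nonneg hf.le _),
    ← mul_assoc, ← mul_assoc, ← Real.mul_rpow hp.le (by positivity),
    mul_one_div_cancel hp.ne', Real.one_rpow, one_mul, ← Real.rpow_mul hf.le, h_exp,
    Real.rpow_sub hf, Real.rpow_one, abs_div, abs_of_pos hf, Real.div_rpow (abs_nonneg a) hf.le]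
  field_simp

lemma one_div_mul_rpow_mul_eq {p : ℝ} (hp : p ≠ 0) {g : ℝ} (hg : 0 < g) (d : ℝ) :
    1 / p * (g ^ p) ^ (1 / p - 1) * (p * g ^ (p - 1) * d) = d := by
  have h_exp : p * (1 / p - 1) = -(p - 1) := by field_simp; ring
  rw [← Real.rpow_mul hg.le, h_exp, Real.rpow_neg hg.le]
  field_simp [(Real.rpow_pos_of_pos hg (p - 1)).ne']

lemma Fp_eq_mul_integral_rpow_deriv_root {M : Type*} [MeasurableSpace M] (lam : Measure M)
    {p : ℝ} (hp : 0 < p) {f : M → ℝ} (hf : ∀ x, 0 < f x) (a : M → ℝ) :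
    Fp lam p f a = p * (∫ x, |1 / p * f x ^ (1 / p - 1) * a x| ^ p ∂lam) ^ (1 / p) := by
  have h_integrand : (fun x => |a x / f x| ^ p * f x)
      = fun x => p ^ p * |1 / p * f x ^ (1 / p - 1) * a x| ^ p :=
    funext fun x => abs_div_rpow_mul_eq hp (hf x) (a x)
  rw [Fp, h_integrand, integral_const_mul,
    Real.mul_rpow (by positivity) (integral_nonneg fun x => by positivity),
    ← Real.rpow_mul hp.le, mul_one_div_cancel hp.ne', Real.rpow_one]

section LpLength

variable {M : Type*} [TopologicalSpace M] [CompactSpace M] [MeasurableSpace M] [BorelSpace M]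
  (lam : Measure M) [IsFiniteMeasure lam] {p : ℝ} [hp : Fact (1 ≤ ENNReal.ofReal p)]

lemma norm_toLp_eq_integral_rpow (u : C(M, ℝ)) :
    ‖ContinuousMap.toLp (ENNReal.ofReal p) lam ℝ u‖ = (∫ x, |u x| ^ p ∂lam) ^ (1 / p) := by
  have hp1 : 1 ≤ p := by simpa using hp.out
  have hae : ⇑(ContinuousMap.toLp (ENNReal.ofReal p) lam ℝ u) =ᵐ[lam] u :=
    ContinuousMap.coeFn_toLp (𝕜 := ℝ) lam u
  have hmem : MemLp u (ENNReal.ofReal p) lam :=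
    ⟨u.continuous.aestronglyMeasurable,
      eLpNorm_congr_ae hae ▸ Lp.eLpNorm_lt_top (ContinuousMap.toLp (ENNReal.ofReal p) lam ℝ u)⟩
  rw [Lp.norm_def, eLpNorm_congr_ae hae,
    hmem.eLpNorm_eq_integral_rpow_norm (by simp; linarith) ENNReal.ofReal_ne_top,
    ENNReal.toReal_ofReal (Real.rpow_nonneg (integral_nonneg fun x => by positivity) _)]
  simp only [ENNReal.toReal_ofReal (zero_le_one.trans hp1), Real.norm_eq_abs, one_div]

include hp in
lemma integral_rpow_abs_intervalIntegral_le {K : ℝ → C(M, ℝ)} (hK : Continuous K) :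
    (∫ x, |(∫ t in (0 : ℝ)..1, K t) x| ^ p ∂lam) ^ (1 / p)
      ≤ ∫ t in (0 : ℝ)..1, (∫ x, |K t x| ^ p ∂lam) ^ (1 / p) := by
  simp only [← norm_toLp_eq_integral_rpow lam]
  rw [← (ContinuousMap.toLp (E := ℝ) (ENNReal.ofReal p) lam ℝ).intervalIntegral_comp_comm
    (hK.intervalIntegrable 0 1)]
  exact intervalIntegral.norm_integral_le_integral_norm zero_le_one

include hp in
lemma integral_rpow_abs_sub_le {u u' : ℝ → M → ℝ}
    (hu' : ContinuousOn (fun q : ℝ × M => u' q.1 q.2) (Icc 0 1 ×ˢ univ))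
    (hu : ∀ x, ∀ t ∈ Icc (0 : ℝ) 1, HasDerivWithinAt (fun s => u s x) (u' t x) (Icc 0 1) t) :
    (∫ x, |u 1 x - u 0 x| ^ p ∂lam) ^ (1 / p)
      ≤ ∫ t in (0 : ℝ)..1, (∫ x, |u' t x| ^ p ∂lam) ^ (1 / p) := by
  -- extend `u'` constantly in `t` outside `[0, 1]` to get a continuous curve in `C(M, ℝ)`
  let clamp : ℝ × M → ℝ × M := fun q => (projIcc 0 1 zero_le_one q.1, q.2)
  have hclamp : Continuous clamp :=
    (continuous_subtype_val.comp (continuous_projIcc.comp continuous_fst)).prodMk continuous_snd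
  let K : C(ℝ, C(M, ℝ)) := ContinuousMap.curry
    ⟨fun q => u' (clamp q).1 (clamp q).2,
      hu'.comp_continuous hclamp fun q => ⟨(projIcc 0 1 zero_le_one q.1).2, mem_univ _⟩⟩
  have hK : ∀ t ∈ Icc (0 : ℝ) 1, ∀ x, K t x = u' t x := fun t ht x => by
    simp [K, clamp, projIcc_of_mem _ ht]
  have hFTC : ∀ x, (∫ t in (0 : ℝ)..1, K t) x = u 1 x - u 0 x := by
    intro x
    have hKx : Continuous fun t => K t x := (continuous_eval_const x).comp K.continuous
    rw [← ContinuousMap.evalCLM_apply ℝ x,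
      ← (ContinuousMap.evalCLM ℝ x).intervalIntegral_comp_comm
        (K.continuous.intervalIntegrable 0 1)]
    refine intervalIntegral.integral_eq_sub_of_hasDeriv_right_of_le zero_le_one
      (fun t ht => (hu x t ht).continuousWithinAt) (fun t ht => ?_) (hKx.intervalIntegrable 0 1)
    rw [ContinuousMap.evalCLM_apply, hK t (Ioo_subset_Icc_self ht)]
    exact ((hu x t (Ioo_subset_Icc_self ht)).hasDerivAt (Icc_mem_nhds ht.1 ht.2)).hasDerivWithinAt
  calc (∫ x, |u 1 x - u 0 x| ^ p ∂lam) ^ (1 / p)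
      = (∫ x, |(∫ t in (0 : ℝ)..1, K t) x| ^ p ∂lam) ^ (1 / p) := by simp only [hFTC]
    _ ≤ ∫ t in (0 : ℝ)..1, (∫ x, |K t x| ^ p ∂lam) ^ (1 / p) :=
      integral_rpow_abs_intervalIntegral_le lam K.continuous
    _ = ∫ t in (0 : ℝ)..1, (∫ x, |u' t x| ^ p ∂lam) ^ (1 / p) :=
      intervalIntegral.integral_congr fun t ht => by
        rw [uIcc_of_le zero_le_one] at ht
        simp only [hK t ht]

end LpLength

theorem integral_rpow_abs_sub_root_le_length {M : Type*} [TopologicalSpace M] [CompactSpace M]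
    [MeasurableSpace M] [BorelSpace M] (lam : Measure M) [IsFiniteMeasure lam] {p : ℝ}
    (hp : 1 ≤ p) {f f' : ℝ → M → ℝ} {f₀ f₁ : M → ℝ} (hf : Admissible f f' f₀ f₁) :
    p * (∫ x, |f₁ x ^ (1 / p) - f₀ x ^ (1 / p)| ^ p ∂lam) ^ (1 / p)
      ≤ ∫ t in (0 : ℝ)..1, Fp lam p (f t) (f' t) := by
  obtain ⟨hf_cont, hf_pos, hf'_cont, hf_deriv, rfl, rfl⟩ := hf
  have hp0 : 0 < p := by linarith
  have : Fact (1 ≤ ENNReal.ofReal p) := ⟨by simpa using hp⟩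
  have h_root_cont :
      ContinuousOn (fun q : ℝ × M => 1 / p * f q.1 q.2 ^ (1 / p - 1) * f' q.1 q.2)
        (Icc 0 1 ×ˢ univ) :=
    (continuousOn_const.mul (hf_cont.rpow_const fun q hq => Or.inl (hf_pos _ hq.1 _).ne')).mul
      hf'_cont
  have h_root_deriv : ∀ x, ∀ t ∈ Icc (0 : ℝ) 1, HasDerivWithinAt (fun s => f s x ^ (1 / p))
      (1 / p * f t x ^ (1 / p - 1) * f' t x) (Icc 0 1) t := fun x t ht =>
    ((hf_deriv x t ht).rpow_const (Or.inl (hf_pos t ht x).ne')).congr_deriv (by ring)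
  calc p * (∫ x, |f 1 x ^ (1 / p) - f 0 x ^ (1 / p)| ^ p ∂lam) ^ (1 / p)
      ≤ p * ∫ t in (0 : ℝ)..1,
          (∫ x, |1 / p * f t x ^ (1 / p - 1) * f' t x| ^ p ∂lam) ^ (1 / p) :=
        mul_le_mul_of_nonneg_left (integral_rpow_abs_sub_le lam h_root_cont h_root_deriv) hp0.le
    _ = ∫ t in (0 : ℝ)..1, Fp lam p (f t) (f' t) := by
        rw [← intervalIntegral.integral_const_mul]
        refine intervalIntegral.integral_congr fun t ht => ?_
        rw [uIcc_of_le zero_le_one] at ht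
        exact (Fp_eq_mul_integral_rpow_deriv_root lam hp0 (hf_pos t ht) (f' t)).symm

section Geodesic

variable {M : Type*}

lemma admissible_rpow [TopologicalSpace M] {p : ℝ} {g g' : ℝ → M → ℝ} {f₀ f₁ : M → ℝ}
    (hg : ContinuousOn (fun q : ℝ × M => g q.1 q.2) (Icc 0 1 ×ˢ univ))
    (hg_pos : ∀ t ∈ Icc (0 : ℝ) 1, ∀ x, 0 < g t x)
    (hg' : ContinuousOn (fun q : ℝ × M => g' q.1 q.2) (Icc 0 1 ×ˢ univ))
    (hg_deriv : ∀ x, ∀ t ∈ Icc (0 : ℝ) 1,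
      HasDerivWithinAt (fun s => g s x) (g' t x) (Icc 0 1) t)
    (hg₀ : ∀ x, g 0 x ^ p = f₀ x) (hg₁ : ∀ x, g 1 x ^ p = f₁ x) :
    Admissible (fun t x => g t x ^ p) (fun t x => p * g t x ^ (p - 1) * g' t x) f₀ f₁ :=
  ⟨hg.rpow_const fun q hq => Or.inl (hg_pos _ hq.1 _).ne',
    fun t ht x => Real.rpow_pos_of_pos (hg_pos t ht x) p,
    (continuousOn_const.mul (hg.rpow_const fun q hq => Or.inl (hg_pos _ hq.1 _).ne')).mul hg',
    fun x t ht => ((hg_deriv x t ht).rpow_const (Or.inl (hg_pos t ht x).ne')).congr_deriv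
      (by ring),
    funext hg₀, funext hg₁⟩

noncomputable def rootLine (p : ℝ) (f₀ f₁ : M → ℝ) (t : ℝ) (x : M) : ℝ :=
  (1 - t) * f₀ x ^ (1 / p) + t * f₁ x ^ (1 / p)

variable {p : ℝ} {f₀ f₁ : M → ℝ}

lemma continuous_rootLine [TopologicalSpace M] (hp : 0 < p) (hf₀ : Continuous f₀)
    (hf₁ : Continuous f₁) :
    Continuous fun q : ℝ × M => rootLine p f₀ f₁ q.1 q.2 := by
  have hp' : 0 ≤ 1 / p := by positivity
  unfold rootLine
  fun_prop (disch := exact fun _ => Or.inr hp')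

lemma rootLine_pos (hf₀ : ∀ x, 0 < f₀ x) (hf₁ : ∀ x, 0 < f₁ x) {t : ℝ} (ht : t ∈ Icc (0 : ℝ) 1)
    (x : M) : 0 < rootLine p f₀ f₁ t x := by
  have h₀ := Real.rpow_pos_of_pos (hf₀ x) (1 / p)
  have h₁ := Real.rpow_pos_of_pos (hf₁ x) (1 / p)
  rcases ht.1.eq_or_lt with rfl | ht₀
  · simpa [rootLine] using h₀
  · exact add_pos_of_nonneg_of_pos (mul_nonneg (by linarith [ht.2]) h₀.le) (mul_pos ht₀ h₁)

lemma hasDerivAt_rootLine (x : M) (t : ℝ) :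
    HasDerivAt (fun s => rootLine p f₀ f₁ s x) (f₁ x ^ (1 / p) - f₀ x ^ (1 / p)) t := by
  have := (((hasDerivAt_id t).const_sub 1).mul_const (f₀ x ^ (1 / p))).add
    ((hasDerivAt_id t).mul_const (f₁ x ^ (1 / p)))
  exact this.congr_deriv (by ring)

lemma rootLine_zero_rpow (hp : p ≠ 0) (hf₀ : ∀ x, 0 < f₀ x) (x : M) :
    rootLine p f₀ f₁ 0 x ^ p = f₀ x := by
  simp [rootLine, Real.rpow_inv_rpow (hf₀ x).le hp]

lemma rootLine_one_rpow (hp : p ≠ 0) (hf₁ : ∀ x, 0 < f₁ x) (x : M) :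
    rootLine p f₀ f₁ 1 x ^ p = f₁ x := by
  simp [rootLine, Real.rpow_inv_rpow (hf₁ x).le hp]

lemma Fp_rpow_rootLine [MeasurableSpace M] (lam : Measure M) (hp : 0 < p)
    (hf₀ : ∀ x, 0 < f₀ x) (hf₁ : ∀ x, 0 < f₁ x) {t : ℝ} (ht : t ∈ Icc (0 : ℝ) 1) :
    Fp lam p (fun x => rootLine p f₀ f₁ t x ^ p)
        (fun x => p * rootLine p f₀ f₁ t x ^ (p - 1) * (f₁ x ^ (1 / p) - f₀ x ^ (1 / p)))
      = p * (∫ x, |f₁ x ^ (1 / p) - f₀ x ^ (1 / p)| ^ p ∂lam) ^ (1 / p) := by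
  have hg := rootLine_pos (p := p) hf₀ hf₁ ht
  rw [Fp_eq_mul_integral_rpow_deriv_root lam hp fun x => Real.rpow_pos_of_pos (hg x) p]
  simp only [one_div_mul_rpow_mul_eq hp.ne' (hg _)]

end Geodesic

/-- Geodesic convexity and the explicit geodesic distance of the `L^p`-Fisher–Rao metric
on positive densities: the infimal length over admissible paths from `f₀` to `f₁` equals
`p·‖f₁^{1/p} − f₀^{1/p}‖_{L^p(λ)}`, attained by the constant-speed path
`f(t,x) = ((1−t)·f₀(x)^{1/p} + t·f₁(x)^{1/p})^p`. -/
theorem stmt_5 {M : Type*} [MetricSpace M] [CompactSpace M] [MeasurableSpace M] [BorelSpace M]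
    (lam : Measure M) [IsFiniteMeasure lam] (p : ℝ) (hp : 1 < p)
    (f₀ f₁ : M → ℝ) (h₀c : Continuous f₀) (h₁c : Continuous f₁)
    (h₀ : ∀ x, 0 < f₀ x) (h₁ : ∀ x, 0 < f₁ x) :
    Admissible (fun t x => ((1 - t) * f₀ x ^ (1 / p) + t * f₁ x ^ (1 / p)) ^ p)
      (fun t x => p * ((1 - t) * f₀ x ^ (1 / p) + t * f₁ x ^ (1 / p)) ^ (p - 1)
        * (f₁ x ^ (1 / p) - f₀ x ^ (1 / p))) f₀ f₁ ∧
    (∀ t ∈ Set.Icc (0 : ℝ) 1,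
      Fp lam p (fun x => ((1 - t) * f₀ x ^ (1 / p) + t * f₁ x ^ (1 / p)) ^ p)
        (fun x => p * ((1 - t) * f₀ x ^ (1 / p) + t * f₁ x ^ (1 / p)) ^ (p - 1)
          * (f₁ x ^ (1 / p) - f₀ x ^ (1 / p)))
        = p * (∫ x, |f₁ x ^ (1 / p) - f₀ x ^ (1 / p)| ^ p ∂lam) ^ (1 / p)) ∧
    (∫ t in (0 : ℝ)..1,
        Fp lam p (fun x => ((1 - t) * f₀ x ^ (1 / p) + t * f₁ x ^ (1 / p)) ^ p)
          (fun x => p * ((1 - t) * f₀ x ^ (1 / p) + t * f₁ x ^ (1 / p)) ^ (p - 1)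
            * (f₁ x ^ (1 / p) - f₀ x ^ (1 / p))))
      = p * (∫ x, |f₁ x ^ (1 / p) - f₀ x ^ (1 / p)| ^ p ∂lam) ^ (1 / p) ∧
    (∀ f f' : ℝ → M → ℝ, Admissible f f' f₀ f₁ →
      p * (∫ x, |f₁ x ^ (1 / p) - f₀ x ^ (1 / p)| ^ p ∂lam) ^ (1 / p)
        ≤ ∫ t in (0 : ℝ)..1, Fp lam p (f t) (f' t)) := by
  have hp0 : 0 < p := by linarith
  have h_root_diff : Continuous fun q : ℝ × M => f₁ q.2 ^ (1 / p) - f₀ q.2 ^ (1 / p) :=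
    ((h₁c.rpow_const fun x => Or.inl (h₁ x).ne').sub
      (h₀c.rpow_const fun x => Or.inl (h₀ x).ne')).comp continuous_snd
  have h_admissible :=
    admissible_rpow (p := p) (g' := fun _ x => f₁ x ^ (1 / p) - f₀ x ^ (1 / p))
      (continuous_rootLine hp0 h₀c h₁c).continuousOn (fun t ht => rootLine_pos h₀ h₁ ht)
      h_root_diff.continuousOn (fun x t _ => (hasDerivAt_rootLine x t).hasDerivWithinAt)
      (rootLine_zero_rpow hp0.ne' h₀) (rootLine_one_rpow hp0.ne' h₁)
  have h_speed := fun t (ht : t ∈ Icc (0 : ℝ) 1) => Fp_rpow_rootLine lam hp0 h₀ h₁ ht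
  refine ⟨h_admissible, h_speed, ?_,
    fun f f' hf => integral_rpow_abs_sub_root_le_length lam hp.le hf⟩
  refine (intervalIntegral.integral_congr fun t ht => h_speed t ?_).trans (by simp)
  rwa [uIcc_of_le zero_le_one] at ht
end

section
/- Let M be a compact metric space, λ a finite Borel measure on M with λ(M) > 0, and p ∈ (1, ∞). Let f, ξ ∈ C(M; ℝ), let I ⊆ ℝ be an open interval, and let τ : I → ℝ be twice differentiable such that f(x) + τ(t)·ξ(x) > 0 for all t ∈ I and x ∈ M, and such that τ″(t) = 2·( ∫_M (f + τ(t)ξ)^{p−1}·ξ dλ / ∫_M (f + τ(t)ξ)^p dλ )·τ′(t)² for all t ∈ I. Then the curve γ : I → L^p(λ) defined by γ(t) = (f + τ(t)·ξ)/‖f + τ(t)·ξ‖_{L^p(λ)} is twice differentiable as a curve in the Banach space L^p(λ), satisfies ‖γ(t)‖_{L^p(λ)} = 1 for all t, and for every t ∈ I there exists c(t) ∈ ℝ such that γ″(t) = c(t)·γ(t). -/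
/-!
Write `γ(t) = c(t) • (f + τ(t) • ξ)` with `c = Φ(τ)^(-1/p)`, where `Φ(s) = ∫ (f + s ξ)^p`.
Differentiating twice, `γ'' = c'' • (f + τ • ξ) + (c τ'' + 2 c' τ') • ξ`. Since `Φ' = p Ψ` with
`Ψ(s) = ∫ (f + s ξ)^(p-1) ξ`, the reparametrization ODE for `τ` says exactly `c τ'' + 2 c' τ' = 0`,
so `γ'' = (c'' / c) • γ`. Compactness of `M` gives the uniform bounds needed to differentiate
`Φ` and `Ψ` under the integral sign.
-/

open MeasureTheory Filter Topology Set

section CompactSpace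

variable {M : Type*} [TopologicalSpace M] [CompactSpace M]

theorem eventually_forall_pos_of_continuous_uncurry {X : Type*} [TopologicalSpace X]
    {G : X → M → ℝ} (hG : Continuous (Function.uncurry G)) {x₀ : X} (hpos : ∀ x, 0 < G x₀ x) :
    ∀ᶠ y in 𝓝 x₀, ∀ x, 0 < G y x := by
  simpa using isCompact_univ.eventually_forall_of_forall_eventually fun x _ =>
    hG.continuousAt.eventually (lt_mem_nhds (hpos x))

variable [MeasurableSpace M] [OpensMeasurableSpace M] {μ : Measure M} [IsFiniteMeasure μ]

theorem Continuous.integrable_of_compactSpace {g : M → ℝ} (hg : Continuous g) :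
    Integrable g μ :=
  hg.integrable_of_hasCompactSupport (HasCompactSupport.of_compactSpace g)

theorem integral_pos_of_continuous_of_pos (hμ : μ ≠ 0) {g : M → ℝ} (hg : Continuous g)
    (hpos : ∀ x, 0 < g x) : 0 < ∫ x, g x ∂μ := by
  rw [integral_pos_iff_support_of_nonneg (fun x => (hpos x).le) hg.integrable_of_compactSpace,
    Function.support_eq_univ fun x => (hpos x).ne']
  exact Measure.measure_univ_pos.mpr hμ

theorem hasDerivAt_integral_of_continuousOn {F F' : ℝ → M → ℝ} {s₀ : ℝ} {U : Set ℝ}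
    (hU : U ∈ 𝓝 s₀) (hF : ∀ s ∈ U, Continuous (F s))
    (hF' : ContinuousOn (Function.uncurry F') (U ×ˢ univ))
    (hderiv : ∀ s ∈ U, ∀ x, HasDerivAt (F · x) (F' s x) s) :
    HasDerivAt (fun s => ∫ x, F s x ∂μ) (∫ x, F' s₀ x ∂μ) s₀ := by
  obtain ⟨ε, hε, hεU⟩ := Metric.nhds_basis_closedBall.mem_iff.mp hU
  obtain ⟨C, hC⟩ := ((isCompact_closedBall s₀ ε).prod isCompact_univ).exists_bound_of_continuousOn
    (hF'.mono (prod_mono hεU subset_rfl))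
  have hF's₀ : Continuous (F' s₀) :=
    hF'.comp_continuous (Continuous.prodMk_right s₀) fun x => ⟨mem_of_mem_nhds hU, trivial⟩
  refine (hasDerivAt_integral_of_dominated_loc_of_deriv_le (bound := fun _ => C)
    (Metric.closedBall_mem_nhds s₀ hε) (eventually_of_mem hU fun s hs => ?_)
    (hF _ (mem_of_mem_nhds hU)).integrable_of_compactSpace hF's₀.aestronglyMeasurable
    (ae_of_all _ fun x s hs => hC (s, x) ⟨hs, trivial⟩) (integrable_const C)
    (ae_of_all _ fun x s hs => hderiv s (hεU hs) x)).2
  exact (hF s hs).aestronglyMeasurable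

theorem hasDerivAt_integral_rpow_mul {f ξ w : M → ℝ} (hf : Continuous f) (hξ : Continuous ξ)
    (hw : Continuous w) (q : ℝ) {s₀ : ℝ} (hpos : ∀ x, 0 < f x + s₀ * ξ x) :
    HasDerivAt (fun s => ∫ x, (f x + s * ξ x) ^ q * w x ∂μ)
      (q * ∫ x, (f x + s₀ * ξ x) ^ (q - 1) * ξ x * w x ∂μ) s₀ := by
  have hU := eventually_forall_pos_of_continuous_uncurry (G := fun s x => f x + s * ξ x)
    (by fun_prop) hpos
  rw [← integral_const_mul (μ := μ)]
  refine hasDerivAt_integral_of_continuousOn (F := fun s x => (f x + s * ξ x) ^ q * w x)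
    (F' := fun s x => q * ((f x + s * ξ x) ^ (q - 1) * ξ x * w x)) hU (fun s hs => ?_)
    (fun z hz => ?_) (fun s hs x => ?_)
  · exact ((by fun_prop : Continuous fun x => f x + s * ξ x).rpow_const
      fun x => Or.inl (hs x).ne').mul hw
  · have : ContinuousAt (fun z : ℝ × M => q * ((f z.2 + z.1 * ξ z.2) ^ (q - 1) * ξ z.2 * w z.2))
        z := by
      fun_prop (disch := exact Or.inl (hz.1 z.2).ne')
    exact this.continuousWithinAt
  · exact ((((hasDerivAt_mul_const (ξ x)).const_add (f x)).rpow_const (p := q)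
      (Or.inl (hs x).ne')).mul_const (w x)).congr_deriv (by ring)

theorem hasDerivAt_integral_rpow {f ξ : M → ℝ} (hf : Continuous f) (hξ : Continuous ξ) (q : ℝ)
    {s₀ : ℝ} (hpos : ∀ x, 0 < f x + s₀ * ξ x) :
    HasDerivAt (fun s => ∫ x, (f x + s * ξ x) ^ q ∂μ)
      (q * ∫ x, (f x + s₀ * ξ x) ^ (q - 1) * ξ x ∂μ) s₀ := by
  simpa using hasDerivAt_integral_rpow_mul (μ := μ) (w := fun _ => 1) hf hξ continuous_const q hpos

end CompactSpace

section Lp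

variable {M E : Type*} [TopologicalSpace M] [CompactSpace M] [MeasurableSpace M] [BorelSpace M]
  {μ : Measure M} [IsFiniteMeasure μ]

theorem ContinuousMap.norm_toLp [NormedAddCommGroup E] [NormedSpace ℝ E]
    [SecondCountableTopologyEither M E] {p : ENNReal} [Fact (1 ≤ p)] (hp : p ≠ ⊤) (u : C(M, E)) :
    ‖ContinuousMap.toLp (E := E) p μ ℝ u‖ = (∫ x, ‖u x‖ ^ p.toReal ∂μ) ^ p.toReal⁻¹ := by
  have hp0 : p ≠ 0 := (zero_lt_one.trans_le Fact.out).ne'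
  rw [Lp.norm_def, eLpNorm_congr_ae (ContinuousMap.coeFn_toLp (𝕜 := ℝ) μ u),
    MemLp.eLpNorm_eq_integral_rpow_norm hp0 hp
      ((Lp.memLp _).ae_eq (ContinuousMap.coeFn_toLp (𝕜 := ℝ) μ u)),
    ENNReal.toReal_ofReal (by positivity)]

variable {p : ℝ} [Fact (1 ≤ ENNReal.ofReal p)]

theorem ContinuousMap.norm_toLp_ofReal (hp : 0 < p) (u : C(M, ℝ)) :
    ‖ContinuousMap.toLp (E := ℝ) (ENNReal.ofReal p) μ ℝ u‖ = (∫ x, |u x| ^ p ∂μ) ^ (1 / p) := by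
  rw [ContinuousMap.norm_toLp ENNReal.ofReal_ne_top, ENNReal.toReal_ofReal hp.le, one_div]
  rfl

theorem ContinuousMap.coeFn_inv_norm_smul_toLp (hp : 0 < p) (u : C(M, ℝ)) :
    ⇑(‖ContinuousMap.toLp (E := ℝ) (ENNReal.ofReal p) μ ℝ u‖⁻¹
        • ContinuousMap.toLp (E := ℝ) (ENNReal.ofReal p) μ ℝ u)
      =ᵐ[μ] fun x => u x / (∫ y, |u y| ^ p ∂μ) ^ (1 / p) := by
  set v := ContinuousMap.toLp (E := ℝ) (ENNReal.ofReal p) μ ℝ u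
  filter_upwards [Lp.coeFn_smul ‖v‖⁻¹ v,
    ContinuousMap.coeFn_toLp (𝕜 := ℝ) (p := ENNReal.ofReal p) μ u] with x hsmul hu
  rw [hsmul, Pi.smul_apply, hu, ContinuousMap.norm_toLp_ofReal hp, smul_eq_mul, inv_mul_eq_div]

end Lp

section ReparametrizedLine

variable {E : Type*} [NormedAddCommGroup E] [NormedSpace ℝ E] (g h : E) {c τ : ℝ → ℝ}

theorem hasDerivAt_smul_add_smul {c₀ τ₀ t : ℝ} (hc : HasDerivAt c c₀ t) (hτ : HasDerivAt τ τ₀ t) :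
    HasDerivAt (fun s => c s • (g + τ s • h)) (c₀ • (g + τ t • h) + (c t * τ₀) • h) t :=
  (hc.smul ((hτ.smul_const h).const_add g)).congr_deriv (by module)

theorem exists_second_deriv_parallel_smul_add_smul {I : Set ℝ} {c' : ℝ → ℝ}
    (hc : ∀ t ∈ I, HasDerivAt c (c' t) t) (hc' : ∀ t ∈ I, DifferentiableAt ℝ c' t)
    (hτ : ∀ t ∈ I, DifferentiableAt ℝ τ t) (hτ' : ∀ t ∈ I, DifferentiableAt ℝ (deriv τ) t)
    (hc0 : ∀ t ∈ I, c t ≠ 0)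
    (hgeod : ∀ t ∈ I, c t * deriv (deriv τ) t + 2 * c' t * deriv τ t = 0) :
    ∃ γ' γ'' : ℝ → E, (∀ t ∈ I, HasDerivAt (fun s => c s • (g + τ s • h)) (γ' t) t) ∧
      (∀ t ∈ I, HasDerivAt γ' (γ'' t) t) ∧
      ∀ t ∈ I, ∃ k : ℝ, γ'' t = k • c t • (g + τ t • h) := by
  refine ⟨fun s => c' s • (g + τ s • h) + (c s * deriv τ s) • h,
    fun s => deriv c' s • (g + τ s • h) + (c s * deriv (deriv τ) s + 2 * c' s * deriv τ s) • h,
    fun t ht => hasDerivAt_smul_add_smul g h (hc t ht) (hτ t ht).hasDerivAt,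
    fun t ht => ?_, fun t ht => ⟨deriv c' t / c t, ?_⟩⟩
  · refine ((hasDerivAt_smul_add_smul g h (hc' t ht).hasDerivAt (hτ t ht).hasDerivAt).add
      (((hc t ht).mul (hτ' t ht).hasDerivAt).smul_const h)).congr_deriv ?_
    module
  · beta_reduce
    rw [hgeod t ht, zero_smul, add_zero, smul_smul, div_mul_cancel₀ _ (hc0 t ht)]

end ReparametrizedLine

section NormalizingFactor

variable {Φ Ψ τ : ℝ → ℝ} {p : ℝ}

theorem hasDerivAt_rpow_neg_inv_comp {t : ℝ} (hp : p ≠ 0) (hΦ : HasDerivAt Φ (p * Ψ (τ t)) (τ t))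
    (hτ : DifferentiableAt ℝ τ t) (hΦpos : 0 < Φ (τ t)) :
    HasDerivAt (fun s => Φ (τ s) ^ (-p⁻¹))
      (-(Φ (τ t) ^ (-p⁻¹ - 1) * Ψ (τ t) * deriv τ t)) t :=
  ((hΦ.comp t hτ.hasDerivAt).rpow_const (Or.inl hΦpos.ne')).congr_deriv
    (by rw [Function.comp_apply]; field_simp)

theorem rpow_neg_inv_mul_add_eq_zero {t : ℝ} (hΦpos : 0 < Φ (τ t))
    (hODE : deriv (deriv τ) t = 2 * (Ψ (τ t) / Φ (τ t)) * deriv τ t ^ 2) :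
    Φ (τ t) ^ (-p⁻¹) * deriv (deriv τ) t
      + 2 * -(Φ (τ t) ^ (-p⁻¹ - 1) * Ψ (τ t) * deriv τ t) * deriv τ t = 0 := by
  rw [hODE, Real.rpow_sub_one hΦpos.ne']
  field_simp
  ring

theorem exists_second_deriv_parallel_rpow_smul_add_smul {E : Type*} [NormedAddCommGroup E]
    [NormedSpace ℝ E] (g h : E) {I : Set ℝ} (hp : p ≠ 0)
    (hΦ : ∀ t ∈ I, HasDerivAt Φ (p * Ψ (τ t)) (τ t)) (hΨ : ∀ t ∈ I, DifferentiableAt ℝ Ψ (τ t))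
    (hτ : ∀ t ∈ I, DifferentiableAt ℝ τ t) (hτ' : ∀ t ∈ I, DifferentiableAt ℝ (deriv τ) t)
    (hΦpos : ∀ t ∈ I, 0 < Φ (τ t))
    (hODE : ∀ t ∈ I, deriv (deriv τ) t = 2 * (Ψ (τ t) / Φ (τ t)) * deriv τ t ^ 2) :
    ∃ γ' γ'' : ℝ → E,
      (∀ t ∈ I, HasDerivAt (fun s => Φ (τ s) ^ (-p⁻¹) • (g + τ s • h)) (γ' t) t) ∧
      (∀ t ∈ I, HasDerivAt γ' (γ'' t) t) ∧
      ∀ t ∈ I, ∃ k : ℝ, γ'' t = k • Φ (τ t) ^ (-p⁻¹) • (g + τ t • h) :=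
  exists_second_deriv_parallel_smul_add_smul g h
    (fun t ht => hasDerivAt_rpow_neg_inv_comp hp (hΦ t ht) (hτ t ht) (hΦpos t ht))
    (fun t ht => ((((hΦ t ht).differentiableAt.comp t (hτ t ht)).rpow_const
      (Or.inl (hΦpos t ht).ne')).mul ((hΨ t ht).comp t (hτ t ht))).mul (hτ' t ht) |>.neg)
    hτ hτ' (fun t ht => (Real.rpow_pos_of_pos (hΦpos t ht) _).ne')
    (fun t ht => rpow_neg_inv_mul_add_eq_zero (hΦpos t ht) (hODE t ht))

end NormalizingFactor

theorem stmt_17_general {M : Type*} [MetricSpace M] [CompactSpace M] [MeasurableSpace M] [BorelSpace M]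
    (lam : Measure M) [IsFiniteMeasure lam] (hlam : 0 < lam Set.univ)
    (p : ℝ) (hp : 1 < p) [Fact (1 ≤ ENNReal.ofReal p)]
    (f ξ : M → ℝ) (hf : Continuous f) (hξ : Continuous ξ)
    (I : Set ℝ)
    (τ : ℝ → ℝ)
    (hτ1 : ∀ t ∈ I, DifferentiableAt ℝ τ t)
    (hτ2 : ∀ t ∈ I, DifferentiableAt ℝ (deriv τ) t)
    (hpos : ∀ t ∈ I, ∀ x, 0 < f x + τ t * ξ x)
    (hODE : ∀ t ∈ I, deriv (deriv τ) t
      = 2 * ((∫ x, (f x + τ t * ξ x) ^ (p - 1) * ξ x ∂lam)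
          / (∫ x, (f x + τ t * ξ x) ^ p ∂lam)) * (deriv τ t) ^ 2) :
    ∃ γ γ' γ'' : ℝ → Lp ℝ (ENNReal.ofReal p) lam,
      (∀ t ∈ I, ⇑(γ t) =ᵐ[lam]
        fun x => (f x + τ t * ξ x) / (∫ y, |f y + τ t * ξ y| ^ p ∂lam) ^ (1 / p)) ∧
      (∀ t ∈ I, HasDerivAt γ (γ' t) t) ∧
      (∀ t ∈ I, HasDerivAt γ' (γ'' t) t) ∧
      (∀ t ∈ I, ‖γ t‖ = 1) ∧
      (∀ t ∈ I, ∃ c : ℝ, γ'' t = c • γ t) := by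
  have hp0 : 0 < p := zero_lt_one.trans hp
  set Φ : ℝ → ℝ := fun s => ∫ x, (f x + s * ξ x) ^ p ∂lam
  set Ψ : ℝ → ℝ := fun s => ∫ x, (f x + s * ξ x) ^ (p - 1) * ξ x ∂lam
  set u : ℝ → C(M, ℝ) := fun s => ⟨fun x => f x + s * ξ x, by fun_prop⟩
  have hΦpos : ∀ t ∈ I, 0 < Φ (τ t) := fun t ht =>
    integral_pos_of_continuous_of_pos (Measure.measure_univ_pos.mp hlam)
      ((u (τ t)).continuous.rpow_const fun x => Or.inl (hpos t ht x).ne')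
      fun x => Real.rpow_pos_of_pos (hpos t ht x) p
  have hΦ : ∀ t ∈ I, HasDerivAt Φ (p * Ψ (τ t)) (τ t) := fun t ht =>
    hasDerivAt_integral_rpow hf hξ p (hpos t ht)
  have hΨ : ∀ t ∈ I, DifferentiableAt ℝ Ψ (τ t) := fun t ht =>
    (hasDerivAt_integral_rpow_mul hf hξ hξ (p - 1) (hpos t ht)).differentiableAt
  set toLp := ContinuousMap.toLp (E := ℝ) (ENNReal.ofReal p) lam ℝ
  obtain ⟨γ', γ'', hγ', hγ'', hpar⟩ := exists_second_deriv_parallel_rpow_smul_add_smul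
    (toLp ⟨f, hf⟩) (toLp ⟨ξ, hξ⟩) hp0.ne' hΦ hΨ hτ1 hτ2 hΦpos hODE
  have hnorm : ∀ t ∈ I, ‖toLp (u (τ t))‖ = Φ (τ t) ^ (1 / p) := fun t ht => by
    rw [ContinuousMap.norm_toLp_ofReal hp0]
    simp only [u, ContinuousMap.coe_mk, abs_of_pos (hpos t ht _), Φ]
  have hγ : ∀ t ∈ I, Φ (τ t) ^ (-p⁻¹) • (toLp ⟨f, hf⟩ + τ t • toLp ⟨ξ, hξ⟩)
      = ‖toLp (u (τ t))‖⁻¹ • toLp (u (τ t)) := fun t ht => by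
    rw [hnorm t ht, one_div, ← Real.rpow_neg (hΦpos t ht).le, ← map_smul, ← map_add]
    rfl
  refine ⟨fun t => Φ (τ t) ^ (-p⁻¹) • (toLp ⟨f, hf⟩ + τ t • toLp ⟨ξ, hξ⟩), γ', γ'',
    fun t ht => ?_, hγ', hγ'', fun t ht => ?_, hpar⟩
  · dsimp only
    rw [hγ t ht]
    exact ContinuousMap.coeFn_inv_norm_smul_toLp hp0 (u (τ t))
  · dsimp only
    rw [hγ t ht, norm_smul, norm_inv, norm_norm,
      inv_mul_cancel₀ (hnorm t ht ▸ (Real.rpow_pos_of_pos (hΦpos t ht) _).ne')]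

/-- Explicit solution of the geodesic equation of the projection connection on the unit
sphere of `L^p(λ)`: if `τ` solves the reparametrization ODE, then the normalized curve
`γ(t) = (f + τ(t)·ξ)/‖f + τ(t)·ξ‖_{L^p}` is a twice differentiable curve in `L^p(λ)` of
unit norm whose second derivative is everywhere parallel to `γ`. -/
theorem stmt_17 {M : Type*} [MetricSpace M] [CompactSpace M] [MeasurableSpace M] [BorelSpace M]
    (lam : Measure M) [IsFiniteMeasure lam] (hlam : 0 < lam Set.univ)
    (p : ℝ) (hp : 1 < p) [Fact (1 ≤ ENNReal.ofReal p)]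
    (f ξ : M → ℝ) (hf : Continuous f) (hξ : Continuous ξ)
    (I : Set ℝ) (hIopen : IsOpen I) (hIconv : Convex ℝ I)
    (τ : ℝ → ℝ)
    (hτ1 : ∀ t ∈ I, DifferentiableAt ℝ τ t)
    (hτ2 : ∀ t ∈ I, DifferentiableAt ℝ (deriv τ) t)
    (hpos : ∀ t ∈ I, ∀ x, 0 < f x + τ t * ξ x)
    (hODE : ∀ t ∈ I, deriv (deriv τ) t
      = 2 * ((∫ x, (f x + τ t * ξ x) ^ (p - 1) * ξ x ∂lam)
          / (∫ x, (f x + τ t * ξ x) ^ p ∂lam)) * (deriv τ t) ^ 2) :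
    ∃ γ γ' γ'' : ℝ → Lp ℝ (ENNReal.ofReal p) lam,
      (∀ t ∈ I, ⇑(γ t) =ᵐ[lam]
        fun x => (f x + τ t * ξ x) / (∫ y, |f y + τ t * ξ y| ^ p ∂lam) ^ (1 / p)) ∧
      (∀ t ∈ I, HasDerivAt γ (γ' t) t) ∧
      (∀ t ∈ I, HasDerivAt γ' (γ'' t) t) ∧
      (∀ t ∈ I, ‖γ t‖ = 1) ∧
      (∀ t ∈ I, ∃ c : ℝ, γ'' t = c • γ t) :=
  stmt_17_general lam hlam p hp f ξ hf hξ I τ hτ1 hτ2 hpos hODE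
end
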